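/- Let ℓ be a prime and n ≥ 1, and set r = ℓⁿ + 1. Then the smallest natural number m ≥ 1 such that r divides ℓᵐ − 1 or r divides ℓᵐ + 1 is m = n. -/
import Mathlib


/-- For a prime `ℓ`, `n ≥ 1` and `r = ℓⁿ + 1`, the smallest `m ≥ 1` such that
`r ∣ ℓᵐ - 1` or `r ∣ ℓᵐ + 1` (in the integers) is `m = n`. -/
theorem least_m_dvd_pow_sub_or_add_one (ℓ n : ℕ) (hℓ : ℓ.Prime) (hn : 1 ≤ n) :
    IsLeast {m : ℕ | 1 ≤ m ∧
      (((ℓ : ℤ) ^ n + 1 ∣ (ℓ : ℤ) ^ m - 1) ∨ ((ℓ : ℤ) ^ n + 1 ∣ (ℓ : ℤ) ^ m + 1))} n := by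
  have hℓ2 : (2 : ℤ) ≤ (ℓ : ℤ) := by exact_mod_cast hℓ.two_le
  constructor
  · exact ⟨hn, Or.inr dvd_rfl⟩
  · rintro m ⟨hm1, hdvd⟩
    by_contra hlt
    push_neg at hlt
    have hmn : m < n := hlt
    have hpowlt : (ℓ : ℤ) ^ m < (ℓ : ℤ) ^ n :=
      pow_lt_pow_right₀ (by linarith) hmn
    have hpos : (0 : ℤ) < (ℓ : ℤ) ^ m - 1 := by
      have : (2 : ℤ) ≤ (ℓ : ℤ) ^ m := by
        calc (2 : ℤ) ≤ (ℓ : ℤ) ^ 1 := by rw [pow_one]; exact hℓ2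
        _ ≤ (ℓ : ℤ) ^ m := pow_le_pow_right₀ (by linarith) hm1
      linarith
    rcases hdvd with h | h
    · have := Int.le_of_dvd hpos h
      linarith
    · have := Int.le_of_dvd (by linarith) h
      linarith
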